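/- arXiv:2106.01761 — 2 statements merged into one kernel-verified Lean document; each statement's English description precedes it below -/
import Mathlib

section
/- Fix α > 0 and d ≥ 1, let ω = (√(α² + 4) − α)/2, q = (2 + α² − α√(α² + 4))/2, let B ∈ ℝ^{d×d} be the lower bidiagonal matrix with B_{ii} = 1 for i = 1,…,d−1, B_{dd} = √(αω), B_{i+1,i} = −1 for i = 1,…,d−1, and all other entries zero, let c = (ω, 0, …, 0)ᵀ, and define H(x, y) = (α/2)‖x‖² + xᵀ(By − c) − (α/2)‖y‖². Then the point x* = (q, q², …, q^d)ᵀ, y* = ω·(q, q², …, q^{d−1}, q^d/√(1−q))ᵀ satisfies ∇_x H(x*, y*) = 0 and ∇_y H(x*, y*) = 0, i.e., (x*, y*) is the saddle point of H on ℝ^d × ℝ^d. -/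
/-!
The partial gradients are `∇ₓH = αx + By − c` and `∇_y H = Bᵀx − αy`. Since `B` is lower
bidiagonal, each coordinate of either gradient involves two consecutive coordinates of the
candidate point, and with `q = ω²` every such identity reduces to `ω² + αω = 1`. The last
coordinate of `y*` is scaled by `1 / √(1 − q) = 1 / √(αω) = 1 / B_dd` precisely so that the
corner entry of `B` cancels.
-/

open scoped RealInnerProductSpace Matrix

theorem hasGradientAt_half_mul_norm_sq_add_inner {E : Type*} [NormedAddCommGroup E]
    [InnerProductSpace ℝ E] [CompleteSpace E] (a C : ℝ) (k x : E) :
    HasGradientAt (fun y => a / 2 * ‖y‖ ^ 2 + ⟪k, y⟫ + C) (a • x + k) x := by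
  rw [hasGradientAt_iff_hasFDerivAt]
  refine ((((hasStrictFDerivAt_norm_sq x).hasFDerivAt.const_mul (a / 2)).add
    (innerSL ℝ k).hasFDerivAt).add_const C).congr_fderiv ?_
  ext y
  simp only [add_apply, smul_apply, coe_innerSL_apply,
    InnerProductSpace.toDual_apply_apply, map_add, map_smul, nsmul_eq_mul, smul_eq_mul]
  ring

section Saddle

variable {ι : Type*} [Fintype ι]

noncomputable def saddleFun (α : ℝ) (B : Matrix ι ι ℝ) (c : ι → ℝ) (x y : EuclideanSpace ℝ ι) :
    ℝ :=
  α / 2 * ‖x‖ ^ 2 + x.ofLp ⬝ᵥ (B *ᵥ y.ofLp - c) - α / 2 * ‖y‖ ^ 2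

variable (α : ℝ) (B : Matrix ι ι ℝ) (c : ι → ℝ) (x y : EuclideanSpace ℝ ι)

theorem hasGradientAt_saddleFun_left :
    HasGradientAt (saddleFun α B c · y) (WithLp.toLp 2 (α • x.ofLp + (B *ᵥ y.ofLp - c))) x := by
  convert hasGradientAt_half_mul_norm_sq_add_inner α (-(α / 2 * ‖y‖ ^ 2))
    (WithLp.toLp 2 (B *ᵥ y.ofLp - c)) x using 2 with x'
  · simp only [saddleFun, EuclideanSpace.inner_eq_star_dotProduct, star_trivial]
    ring
  · rfl

theorem hasGradientAt_saddleFun_right :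
    HasGradientAt (saddleFun α B c x ·) (WithLp.toLp 2 (x.ofLp ᵥ* B - α • y.ofLp)) y := by
  convert hasGradientAt_half_mul_norm_sq_add_inner (-α) (α / 2 * ‖x‖ ^ 2 - x.ofLp ⬝ᵥ c)
    (WithLp.toLp 2 (x.ofLp ᵥ* B)) y using 2 with y'
  · simp only [saddleFun, EuclideanSpace.inner_eq_star_dotProduct, star_trivial, dotProduct_sub,
      Matrix.dotProduct_mulVec, dotProduct_comm y'.ofLp]
    ring
  · ext i
    simp [sub_eq_add_neg, add_comm]

end Saddle

section LowerBidiag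

variable {m n : ℕ}

def lowerBidiag (δ : Fin m → ℝ) : Matrix (Fin m) (Fin m) ℝ :=
  Matrix.of fun i j => if i = j then δ i else if (i : ℕ) = j + 1 then -1 else 0

variable (δ v : Fin (n + 1) → ℝ)

theorem lowerBidiag_mulVec_zero : (lowerBidiag δ *ᵥ v) 0 = δ 0 * v 0 := by
  rw [Matrix.mulVec, dotProduct, Fintype.sum_eq_single 0]
  · simp [lowerBidiag]
  · intro j hj
    simp [lowerBidiag, Ne.symm hj]

theorem lowerBidiag_mulVec_succ (k : Fin n) :
    (lowerBidiag δ *ᵥ v) k.succ = δ k.succ * v k.succ - v k.castSucc := by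
  rw [Matrix.mulVec, dotProduct, Fintype.sum_eq_add k.succ k.castSucc k.castSucc_lt_succ.ne']
  · simp [lowerBidiag, sub_eq_add_neg, k.castSucc_lt_succ.ne']
  · rintro j ⟨hj₁, hj₂⟩
    have hkj : (k : ℕ) ≠ j := fun h => hj₂ (Fin.ext h.symm)
    simp [lowerBidiag, Ne.symm hj₁, hkj]

theorem lowerBidiag_vecMul_last :
    (v ᵥ* lowerBidiag δ) (Fin.last n) = δ (Fin.last n) * v (Fin.last n) := by
  rw [Matrix.vecMul, dotProduct, Fintype.sum_eq_single (Fin.last n)]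
  · simp [lowerBidiag, mul_comm]
  · intro i hi
    simp [lowerBidiag, hi, i.isLt.ne]

theorem lowerBidiag_vecMul_castSucc (k : Fin n) :
    (v ᵥ* lowerBidiag δ) k.castSucc = δ k.castSucc * v k.castSucc - v k.succ := by
  rw [Matrix.vecMul, dotProduct, Fintype.sum_eq_add k.castSucc k.succ k.castSucc_lt_succ.ne]
  · simp [lowerBidiag, sub_eq_add_neg, mul_comm, k.castSucc_lt_succ.ne']
  · rintro i ⟨hi₁, hi₂⟩
    have hik : (i : ℕ) ≠ k + 1 := fun h => hi₂ (Fin.ext h)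
    simp [lowerBidiag, hi₁, hik]

end LowerBidiag

/-- The positive root of `t² + αt − 1`. -/
noncomputable def posRoot (α : ℝ) : ℝ := (√(α ^ 2 + 4) - α) / 2

theorem posRoot_pos (α : ℝ) : 0 < posRoot α := by
  have : |α| < √(α ^ 2 + 4) := by
    rw [← Real.sqrt_sq_eq_abs]; exact Real.sqrt_lt_sqrt (sq_nonneg α) (by linarith)
  unfold posRoot; linarith [le_abs_self α]

theorem posRoot_sq_add_mul (α : ℝ) : posRoot α ^ 2 + α * posRoot α = 1 := by
  have := Real.sq_sqrt (by positivity : (0 : ℝ) ≤ α ^ 2 + 4)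
  unfold posRoot; linear_combination this / 4

theorem posRoot_sq (α : ℝ) : posRoot α ^ 2 = (2 + α ^ 2 - α * √(α ^ 2 + 4)) / 2 := by
  have := Real.sq_sqrt (by positivity : (0 : ℝ) ≤ α ^ 2 + 4)
  unfold posRoot; linear_combination this / 4

namespace HardInstance

variable {n : ℕ} (α ω q r : ℝ)

def diag : Fin (n + 1) → ℝ := fun i => if (i : ℕ) = n then r else 1

def c : Fin (n + 1) → ℝ := fun i => if (i : ℕ) = 0 then ω else 0

def xStar : Fin (n + 1) → ℝ := fun i => q ^ ((i : ℕ) + 1)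

noncomputable def yStar : Fin (n + 1) → ℝ :=
  fun i => ω * if (i : ℕ) = n then q ^ (n + 1) / r else q ^ ((i : ℕ) + 1)

theorem diag_mul_yStar {r : ℝ} (hr : r ≠ 0) (i : Fin (n + 1)) :
    diag r i * yStar ω q r i = ω * q ^ ((i : ℕ) + 1) := by
  by_cases hi : (i : ℕ) = n
  · simp only [diag, yStar, hi, ↓reduceIte]
    field_simp
  · simp only [diag, yStar, if_neg hi, one_mul]

theorem yStar_castSucc (k : Fin n) : yStar ω q r k.castSucc = ω * q ^ ((k : ℕ) + 1) := by
  simp [yStar, k.isLt.ne]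

variable {α ω q r}

theorem gradient_left_eq_zero (hq : α * q + ω * q = ω) (hr : r ≠ 0) :
    α • (xStar q : Fin (n + 1) → ℝ) + (lowerBidiag (diag r) *ᵥ yStar ω q r - c ω) = 0 := by
  funext i
  induction i using Fin.cases with
  | zero =>
    simp only [Pi.zero_apply, Pi.add_apply, Pi.smul_apply, Pi.sub_apply, smul_eq_mul,
      lowerBidiag_mulVec_zero, diag_mul_yStar ω q hr, xStar, c, Fin.val_zero, if_true]
    linear_combination hq
  | succ k =>
    simp only [Pi.zero_apply, Pi.add_apply, Pi.smul_apply, Pi.sub_apply, smul_eq_mul,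
      lowerBidiag_mulVec_succ, diag_mul_yStar ω q hr, yStar_castSucc, xStar, c, Fin.val_succ,
      Nat.succ_ne_zero, if_false]
    linear_combination q ^ ((k : ℕ) + 1) * hq

theorem gradient_right_eq_zero (hq : q + α * ω = 1) (hr : r ^ 2 = α * ω) (hr0 : r ≠ 0) :
    (xStar q : Fin (n + 1) → ℝ) ᵥ* lowerBidiag (diag r) - α • yStar ω q r = 0 := by
  funext j
  induction j using Fin.lastCases with
  | last =>
    simp only [Pi.zero_apply, Pi.sub_apply, Pi.smul_apply, smul_eq_mul, lowerBidiag_vecMul_last,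
      xStar, yStar, diag, Fin.val_last, if_true]
    field_simp
    linear_combination q ^ (n + 1) * hr
  | cast k =>
    simp only [Pi.zero_apply, Pi.sub_apply, Pi.smul_apply, smul_eq_mul, lowerBidiag_vecMul_castSucc,
      yStar_castSucc, xStar, diag, Fin.val_castSucc, Fin.val_succ, k.isLt.ne, if_false]
    linear_combination -q ^ ((k : ℕ) + 1) * hq

end HardInstance

/-- For `α > 0`, `d ≥ 1`, `ω = (√(α²+4) − α)/2`, `q = (2+α²−α√(α²+4))/2`,
with `B`, `c`, `H` as in the hard-instance construction, the point
`x* = (q, q², …, q^d)`, `y* = ω(q, q², …, q^{d−1}, q^d/√(1−q))` satisfies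
`∇ₓH(x*, y*) = 0` and `∇_y H(x*, y*) = 0`, i.e. it is the saddle point of `H`. -/
theorem hard_instance_H_saddle
    {d : ℕ} (hd : 1 ≤ d) (α : ℝ) (hα : 0 < α)
    (ω : ℝ) (hω : ω = (Real.sqrt (α ^ 2 + 4) - α) / 2)
    (q : ℝ) (hq : q = (2 + α ^ 2 - α * Real.sqrt (α ^ 2 + 4)) / 2)
    (B : Fin d → Fin d → ℝ)
    (hB : B = fun (i j : Fin d) =>
      if i = j then (if (i : ℕ) = d - 1 then Real.sqrt (α * ω) else 1)
      else if (i : ℕ) = (j : ℕ) + 1 then -1 else 0)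
    (c : Fin d → ℝ) (hc : c = fun (i : Fin d) => if (i : ℕ) = 0 then ω else 0)
    (H : EuclideanSpace ℝ (Fin d) → EuclideanSpace ℝ (Fin d) → ℝ)
    (hH : H = fun x y =>
      α / 2 * ‖x‖ ^ 2 + (∑ i, x i * ((∑ j, B i j * y j) - c i)) - α / 2 * ‖y‖ ^ 2)
    (xs ys : EuclideanSpace ℝ (Fin d))
    (hxs : xs = fun (i : Fin d) => q ^ ((i : ℕ) + 1))
    (hys : ys = fun (i : Fin d) =>
      ω * (if (i : ℕ) = d - 1 then q ^ d / Real.sqrt (1 - q) else q ^ ((i : ℕ) + 1))) :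
    gradient (fun x => H x ys) xs = 0 ∧ gradient (fun y => H xs y) ys = 0 := by
  obtain ⟨n, rfl⟩ := Nat.exists_eq_add_of_le' hd
  have hω' : ω = posRoot α := hω
  have hω_root : ω ^ 2 + α * ω = 1 := hω' ▸ posRoot_sq_add_mul α
  have hq_sq : q = ω ^ 2 := hq.trans (hω' ▸ (posRoot_sq α).symm)
  have hαω : 0 < α * ω := mul_pos hα (hω' ▸ posRoot_pos α)
  have hsqrt : √(1 - q) = √(α * ω) := by rw [hq_sq, ← hω_root, add_sub_cancel_left]
  have hxs' : xs.ofLp = HardInstance.xStar q := hxs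
  have hys' : ys.ofLp = HardInstance.yStar ω q √(α * ω) := by rw [hys, hsqrt]; rfl
  -- with `d = n + 1`, `d - 1` unfolds to `n`, so the data are the `HardInstance` ones up to `rfl`
  subst hB hc
  rw [show H = saddleFun α (lowerBidiag (HardInstance.diag √(α * ω))) (HardInstance.c ω) from hH,
    (hasGradientAt_saddleFun_left ..).gradient, (hasGradientAt_saddleFun_right ..).gradient,
    hxs', hys']
  have hr0 : √(α * ω) ≠ 0 := (Real.sqrt_pos.2 hαω).ne'
  exact ⟨congrArg (WithLp.toLp 2) (HardInstance.gradient_left_eq_zero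
      (by rw [hq_sq]; linear_combination ω * hω_root) hr0),
    congrArg (WithLp.toLp 2) (HardInstance.gradient_right_eq_zero
      (by rw [hq_sq]; exact hω_root) (Real.sq_sqrt hαω.le) hr0)⟩
end

section
/- Fix α > 0, λ > 0, n ≥ 1, d ≥ 1. Let H(u, v) = (α/2)‖u‖² + uᵀ(Bv − c) − (α/2)‖v‖² on ℝ^d × ℝ^d with B and c as in the hard-instance construction, let U_1, …, U_n ∈ ℝ^{d×nd} be the blocks of a partition of the identity matrix of order nd (so the identity is [U_1ᵀ, …, U_nᵀ]), and define f_i(x, y) = λ·H(U_i x, U_i y) on ℝ^{nd} × ℝ^{nd} and f = (1/n)∑_{i=1}^n f_i. Then the family {f_i}_{i=1}^n is λ·√((8 + 2α²)/n)-average smooth, and f is (λα/n, λα/n)-convex-concave. -/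
/-!
Blockwise, `∇_x f_i = λ U_iᵀ (α U_i x + B U_i y - c)` and `∇_y f_i = λ U_iᵀ (Bᵀ U_i x - α U_i y)`,
so the gradient differences are bounded with `(p + q)² ≤ 2p² + 2q²` once `‖B‖ ≤ 2`. That operator
bound is the Schur test: every row and column of the bidiagonal `B` has absolute sum at most `2`,
because `ω² + αω = 1` puts the corner entry `√(αω)` in `[0, 1]`. Summing the blocks recovers
`‖x - x'‖² + ‖y - y'‖²`. For the second claim, `(1/n) ∑ f_i(·, y)` is `(λα/2n)‖·‖²` plus an affine
function, and symmetrically in `y`.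
-/

open Finset Matrix

/-- The Schur test, in squared form. -/
theorem Matrix.sum_sq_mulVec_le_of_sum_abs_le {ι κ : Type*} [Fintype ι] [Fintype κ]
    (M : Matrix ι κ ℝ) {R C : ℝ} (hR₀ : 0 ≤ R) (hR : ∀ i, ∑ j, |M i j| ≤ R)
    (hC : ∀ j, ∑ i, |M i j| ≤ C) (b : κ → ℝ) :
    ∑ i, (M *ᵥ b) i ^ 2 ≤ R * C * ∑ j, b j ^ 2 := by
  have cauchy_schwarz : ∀ i, (M *ᵥ b) i ^ 2 ≤ (∑ j, |M i j|) * ∑ j, |M i j| * b j ^ 2 := fun i =>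
    sum_sq_le_sum_mul_sum_of_sq_le_mul _ (fun j _ => abs_nonneg _)
      (fun j _ => mul_nonneg (abs_nonneg _) (sq_nonneg _))
      (fun j _ => le_of_eq <| by rw [mul_pow, ← sq_abs (M i j)]; ring)
  calc ∑ i, (M *ᵥ b) i ^ 2 ≤ ∑ i, R * ∑ j, |M i j| * b j ^ 2 :=
        sum_le_sum fun i _ => (cauchy_schwarz i).trans <| mul_le_mul_of_nonneg_right (hR i) <|
          sum_nonneg fun j _ => mul_nonneg (abs_nonneg _) (sq_nonneg _)
    _ = R * ∑ j, (∑ i, |M i j|) * b j ^ 2 := by rw [← mul_sum, sum_comm]; simp_rw [sum_mul]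
    _ ≤ R * ∑ j, C * b j ^ 2 := mul_le_mul_of_nonneg_left
        (sum_le_sum fun j _ => mul_le_mul_of_nonneg_right (hC j) (sq_nonneg _)) hR₀
    _ = R * C * ∑ j, b j ^ 2 := by rw [← mul_sum, mul_assoc]

theorem Fin.sum_abs_le_two_of_eq_zero {d : ℕ} (g : Fin d → ℝ) (m m' : ℕ) (hg : ∀ j, |g j| ≤ 1)
    (h₀ : ∀ j : Fin d, (j : ℕ) ≠ m → (j : ℕ) ≠ m' → g j = 0) : ∑ j, |g j| ≤ 2 := by
  have card_le_one : ∀ k : ℕ, #{j : Fin d | (j : ℕ) = k} ≤ 1 := fun k =>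
    card_le_one.mpr fun a ha b hb => Fin.ext <| by simp_all
  calc ∑ j, |g j|
      ≤ ∑ j : Fin d, ((if (j : ℕ) = m then 1 else 0) + (if (j : ℕ) = m' then 1 else 0)) := by
        refine sum_le_sum fun j _ => ?_
        have := hg j
        split_ifs
        all_goals first | linarith | simp [h₀ j ‹_› ‹_›]
    _ ≤ 2 := by
        rw [sum_add_distrib, sum_boole, sum_boole]
        have := card_le_one m; have := card_le_one m'
        norm_cast; omega

section Bidiagonal

variable {d : ℕ} {B : Matrix (Fin d) (Fin d) ℝ}

theorem Matrix.sum_abs_row_le_two_of_bidiagonal (hB : ∀ i j, |B i j| ≤ 1)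
    (hB₀ : ∀ i j : Fin d, i ≠ j → (i : ℕ) ≠ j + 1 → B i j = 0) (i : Fin d) :
    ∑ j, |B i j| ≤ 2 :=
  Fin.sum_abs_le_two_of_eq_zero _ i (i - 1) (hB i) fun j h h' =>
    hB₀ i j (fun e => h (e ▸ rfl)) (by omega)

theorem Matrix.sum_abs_col_le_two_of_bidiagonal (hB : ∀ i j, |B i j| ≤ 1)
    (hB₀ : ∀ i j : Fin d, i ≠ j → (i : ℕ) ≠ j + 1 → B i j = 0) (j : Fin d) :
    ∑ i, |B i j| ≤ 2 :=
  Fin.sum_abs_le_two_of_eq_zero (fun i => B i j) j (j + 1) (hB · j) fun i h h' =>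
    hB₀ i j (fun e => h (e ▸ rfl)) h'

theorem Matrix.sum_sq_mulVec_le_four_of_bidiagonal (hB : ∀ i j, |B i j| ≤ 1)
    (hB₀ : ∀ i j : Fin d, i ≠ j → (i : ℕ) ≠ j + 1 → B i j = 0) (b : Fin d → ℝ) :
    ∑ i, (B *ᵥ b) i ^ 2 ≤ 4 * ∑ j, b j ^ 2 :=
  (B.sum_sq_mulVec_le_of_sum_abs_le zero_le_two (sum_abs_row_le_two_of_bidiagonal hB hB₀)
    (sum_abs_col_le_two_of_bidiagonal hB hB₀) b).trans_eq (by norm_num)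

theorem Matrix.sum_sq_transpose_mulVec_le_four_of_bidiagonal (hB : ∀ i j, |B i j| ≤ 1)
    (hB₀ : ∀ i j : Fin d, i ≠ j → (i : ℕ) ≠ j + 1 → B i j = 0) (b : Fin d → ℝ) :
    ∑ i, (Bᵀ *ᵥ b) i ^ 2 ≤ 4 * ∑ j, b j ^ 2 :=
  (Bᵀ.sum_sq_mulVec_le_of_sum_abs_le zero_le_two (sum_abs_col_le_two_of_bidiagonal hB hB₀)
    (sum_abs_row_le_two_of_bidiagonal hB hB₀) b).trans_eq (by norm_num)

end Bidiagonal

theorem sum_sq_saddle_gradient_le {κ : Type*} [Fintype κ] {B : Matrix κ κ ℝ} {K : ℝ}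
    (hB : ∀ b, ∑ j, (B *ᵥ b) j ^ 2 ≤ K * ∑ j, b j ^ 2)
    (hBt : ∀ b, ∑ j, (Bᵀ *ᵥ b) j ^ 2 ≤ K * ∑ j, b j ^ 2) (α : ℝ) (a b : κ → ℝ) :
    ∑ j, (α * a j + (B *ᵥ b) j) ^ 2 + ∑ j, ((Bᵀ *ᵥ a) j - α * b j) ^ 2
      ≤ 2 * (K + α ^ 2) * (∑ j, a j ^ 2 + ∑ j, b j ^ 2) := by
  have h₁ := sum_le_sum fun j (_ : j ∈ univ) => add_sq_le (a := α * a j) (b := (B *ᵥ b) j)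
  have h₂ := sum_le_sum fun j (_ : j ∈ univ) => add_sq_le (a := (Bᵀ *ᵥ a) j) (b := -(α * b j))
  simp only [← mul_sum, sum_add_distrib, mul_pow, neg_sq, ← sub_eq_add_neg] at h₁ h₂
  linarith [hB b, hBt a]

theorem Matrix.sum_mul_mulVec_eq_sum_mul_transpose_mulVec {R κ κ' : Type*} [CommSemiring R]
    [Fintype κ] [Fintype κ'] (M : Matrix κ κ' R) (u : κ → R) (v : κ' → R) :
    ∑ j, u j * (M *ᵥ v) j = ∑ j, v j * (Mᵀ *ᵥ u) j := by
  simpa [dotProduct, mulVec_transpose, mul_comm] using dotProduct_mulVec u M v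

section Blocks

variable {ι κ : Type*}

theorem EuclideanSpace.norm_sq_eq_sum_blocks [Fintype ι] [Fintype κ]
    (x : EuclideanSpace ℝ (ι × κ)) : ‖x‖ ^ 2 = ∑ i, ∑ j, x (i, j) ^ 2 := by
  rw [EuclideanSpace.real_norm_sq_eq, Fintype.sum_prod_type]

variable [DecidableEq ι]

/-- The adjoint `U_iᵀ` of the restriction `x ↦ (x (i, j))_j` to the `i`-th block. -/
def blockEmbed (i : ι) (u : κ → ℝ) : EuclideanSpace ℝ (ι × κ) :=
  WithLp.toLp 2 fun p => if p.1 = i then u p.2 else 0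

theorem blockEmbed_sub (i : ι) (u v : κ → ℝ) :
    blockEmbed i u - blockEmbed i v = blockEmbed i (u - v) := by
  ext p
  by_cases h : p.1 = i <;> simp [blockEmbed, h]

variable [Fintype ι] [Fintype κ]

theorem norm_blockEmbed_sq (i : ι) (u : κ → ℝ) : ‖blockEmbed i u‖ ^ 2 = ∑ j, u j ^ 2 := by
  simp [EuclideanSpace.real_norm_sq_eq, blockEmbed, Fintype.sum_prod_type, apply_ite (· ^ 2)]

theorem hasGradientAt_blockQuadratic (i : ι) (a : ℝ) (w : κ → ℝ) (C : ℝ)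
    (x : EuclideanSpace ℝ (ι × κ)) :
    HasGradientAt (fun z : EuclideanSpace ℝ (ι × κ) =>
        a / 2 * ∑ j, z (i, j) ^ 2 + ∑ j, z (i, j) * w j + C)
      (blockEmbed i fun j => a * x (i, j) + w j) x := by
  rw [hasGradientAt_iff_hasFDerivAt]
  have proj := fun j => (EuclideanSpace.proj (𝕜 := ℝ) (i, j)).hasFDerivAt (x := x)
  refine ((((HasFDerivAt.fun_sum fun j _ => (proj j).pow 2).const_mul (a / 2)).add
    (HasFDerivAt.fun_sum fun j _ => (proj j).mul_const (w j))).add_const C).congr_fderiv ?_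
  ext z
  simp [blockEmbed, PiLp.inner_apply, Fintype.sum_prod_type, mul_sum, ← sum_add_distrib]
  refine sum_congr rfl fun j _ => ?_
  ring

end Blocks

section StrongConvexity

variable {E : Type*} [NormedAddCommGroup E] [InnerProductSpace ℝ E] {φ : E → ℝ} {m : ℝ}

theorem strongConvexOn_univ_of_eq_add_inner (w : E) (C : ℝ)
    (hφ : ∀ x, φ x = m / 2 * ‖x‖ ^ 2 + inner ℝ w x + C) : StrongConvexOn Set.univ m φ := by
  rw [strongConvexOn_iff_convex]
  have affine : (fun x => φ x - m / 2 * ‖x‖ ^ 2) = fun x => innerₛₗ ℝ w x + C := by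
    funext x; rw [hφ, innerₛₗ_apply_apply]; ring
  rw [affine]
  exact ((innerₛₗ ℝ w).convexOn convex_univ).add_const C

theorem strongConcaveOn_univ_of_eq_add_inner (w : E) (C : ℝ)
    (hφ : ∀ x, φ x = -(m / 2 * ‖x‖ ^ 2) + inner ℝ w x + C) : StrongConcaveOn Set.univ m φ := by
  rw [strongConcaveOn_iff_convex]
  have affine : (fun x => φ x + m / 2 * ‖x‖ ^ 2) = fun x => innerₛₗ ℝ w x + C := by
    funext x; rw [hφ, innerₛₗ_apply_apply]; ring
  rw [affine]
  exact ((innerₛₗ ℝ w).concaveOn convex_univ).add_const C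

end StrongConvexity

section BlockSaddle

variable {ι κ : Type*} [Fintype ι] [Fintype κ] (α lam : ℝ) (B : Matrix κ κ ℝ) (c : κ → ℝ)

/-- `λ H(U_i x, U_i y)`, with the norms and the pairing of the hard instance written out in
coordinates. -/
noncomputable def blockSaddle (i : ι) (x y : EuclideanSpace ℝ (ι × κ)) : ℝ :=
  lam * (α / 2 * ∑ j, x (i, j) ^ 2 + ∑ j, x (i, j) * ((B *ᵥ fun l => y (i, l)) j - c j)
    - α / 2 * ∑ j, y (i, j) ^ 2)

theorem strongConvexOn_smul_sum_blockSaddle (t : ℝ) (y : EuclideanSpace ℝ (ι × κ)) :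
    StrongConvexOn Set.univ (lam * α * t) fun x => t * ∑ i, blockSaddle α lam B c i x y := by
  refine strongConvexOn_univ_of_eq_add_inner
    (WithLp.toLp 2 fun p => t * lam * ((B *ᵥ fun l => y (p.1, l)) p.2 - c p.2))
    (-(t * lam * α / 2) * ‖y‖ ^ 2) fun x => ?_
  simp only [blockSaddle, EuclideanSpace.norm_sq_eq_sum_blocks, PiLp.inner_apply,
    Fintype.sum_prod_type, RCLike.inner_apply, conj_trivial, mul_sum, ← sum_add_distrib,
    ← sum_sub_distrib]
  refine sum_congr rfl fun i _ => sum_congr rfl fun j _ => ?_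
  ring

theorem strongConcaveOn_smul_sum_blockSaddle (t : ℝ) (x : EuclideanSpace ℝ (ι × κ)) :
    StrongConcaveOn Set.univ (lam * α * t) fun y => t * ∑ i, blockSaddle α lam B c i x y := by
  refine strongConcaveOn_univ_of_eq_add_inner
    (WithLp.toLp 2 fun p => t * lam * (Bᵀ *ᵥ fun l => x (p.1, l)) p.2)
    (t * lam * (α / 2 * ‖x‖ ^ 2 - ∑ i, ∑ j, x (i, j) * c j)) fun y => ?_
  simp only [blockSaddle, mul_sub, sum_sub_distrib, B.sum_mul_mulVec_eq_sum_mul_transpose_mulVec]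
  simp only [EuclideanSpace.norm_sq_eq_sum_blocks, PiLp.inner_apply, Fintype.sum_prod_type,
    RCLike.inner_apply, conj_trivial, mul_sum, ← sum_add_distrib, ← sum_sub_distrib,
    ← sum_neg_distrib]
  refine sum_congr rfl fun i _ => sum_congr rfl fun j _ => ?_
  ring

variable [DecidableEq ι]

theorem gradient_blockSaddle_fst (i : ι) (x y : EuclideanSpace ℝ (ι × κ)) :
    gradient (fun u => blockSaddle α lam B c i u y) x =
      blockEmbed i fun j => lam * (α * x (i, j) + ((B *ᵥ fun l => y (i, l)) j - c j)) := by
  have hq := hasGradientAt_blockQuadratic i (lam * α)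
    (fun j => lam * ((B *ᵥ fun l => y (i, l)) j - c j)) (-(lam * (α / 2 * ∑ j, y (i, j) ^ 2))) x
  convert hq.gradient using 2
  · funext u
    simp only [blockSaddle, mul_left_comm _ lam, ← mul_sum]
    ring
  · funext j; ring

theorem gradient_blockSaddle_snd (i : ι) (x y : EuclideanSpace ℝ (ι × κ)) :
    gradient (fun v => blockSaddle α lam B c i x v) y =
      blockEmbed i fun j => lam * ((Bᵀ *ᵥ fun l => x (i, l)) j - α * y (i, j)) := by
  have hq := hasGradientAt_blockQuadratic i (-(lam * α))
    (fun j => lam * (Bᵀ *ᵥ fun l => x (i, l)) j)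
    (lam * (α / 2 * ∑ j, x (i, j) ^ 2 - ∑ j, x (i, j) * c j)) y
  convert hq.gradient using 2
  · funext v
    simp only [blockSaddle, mul_sub, sum_sub_distrib, B.sum_mul_mulVec_eq_sum_mul_transpose_mulVec,
      mul_left_comm _ lam, ← mul_sum]
    ring
  · funext j; ring

theorem sum_norm_sq_sub_gradient_blockSaddle_le {K : ℝ}
    (hB : ∀ b, ∑ j, (B *ᵥ b) j ^ 2 ≤ K * ∑ j, b j ^ 2)
    (hBt : ∀ b, ∑ j, (Bᵀ *ᵥ b) j ^ 2 ≤ K * ∑ j, b j ^ 2) (x x' y y' : EuclideanSpace ℝ (ι × κ)) :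
    ∑ i, (‖gradient (fun u => blockSaddle α lam B c i u y) x
            - gradient (fun u => blockSaddle α lam B c i u y') x'‖ ^ 2
          + ‖gradient (fun v => blockSaddle α lam B c i x v) y
            - gradient (fun v => blockSaddle α lam B c i x' v) y'‖ ^ 2)
      ≤ lam ^ 2 * (2 * (K + α ^ 2)) * (‖x - x'‖ ^ 2 + ‖y - y'‖ ^ 2) := by
  simp only [gradient_blockSaddle_fst, gradient_blockSaddle_snd, blockEmbed_sub,
    norm_blockEmbed_sq]
  rw [EuclideanSpace.norm_sq_eq_sum_blocks, EuclideanSpace.norm_sq_eq_sum_blocks,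
    ← sum_add_distrib, mul_sum]
  refine sum_le_sum fun i _ => ?_
  set a : κ → ℝ := (fun l => x (i, l)) - fun l => x' (i, l)
  set b : κ → ℝ := (fun l => y (i, l)) - fun l => y' (i, l)
  calc _ = lam ^ 2 * (∑ j, (α * a j + (B *ᵥ b) j) ^ 2 + ∑ j, ((Bᵀ *ᵥ a) j - α * b j) ^ 2) := by
        simp only [a, b, mulVec_sub, mul_add, mul_sum, ← sum_add_distrib]
        refine sum_congr rfl fun j _ => ?_
        simp only [Pi.sub_apply]
        ring
    _ ≤ lam ^ 2 * (2 * (K + α ^ 2) * (∑ j, a j ^ 2 + ∑ j, b j ^ 2)) := by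
        gcongr
        exact sum_sq_saddle_gradient_le hB hBt α a b
    _ = _ := by simp only [a, b, Pi.sub_apply, PiLp.sub_apply]; ring

end BlockSaddle

theorem mul_sqrt_sq_add_four_sub_div_two_le_one (α : ℝ) :
    α * ((Real.sqrt (α ^ 2 + 4) - α) / 2) ≤ 1 := by
  set ω := (Real.sqrt (α ^ 2 + 4) - α) / 2 with hω
  have root : ω ^ 2 + α * ω = 1 := by
    rw [hω]; linear_combination Real.sq_sqrt (by positivity : 0 ≤ α ^ 2 + 4) / 4
  linarith [sq_nonneg ω]

theorem hard_instance_finite_sum_properties_general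
    {d n : ℕ} (α : ℝ) (lam : ℝ)
    (ω : ℝ) (hω : ω = (Real.sqrt (α ^ 2 + 4) - α) / 2)
    (B : Fin d → Fin d → ℝ)
    (hB : B = fun (i j : Fin d) =>
      if i = j then (if (i : ℕ) = d - 1 then Real.sqrt (α * ω) else 1)
      else if (i : ℕ) = (j : ℕ) + 1 then -1 else 0)
    (c : Fin d → ℝ)
    (H : EuclideanSpace ℝ (Fin d) → EuclideanSpace ℝ (Fin d) → ℝ)
    (hH : H = fun u v =>
      α / 2 * ‖u‖ ^ 2 + (∑ i, u i * ((∑ j, B i j * v j) - c i)) - α / 2 * ‖v‖ ^ 2)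
    (U : Fin n → EuclideanSpace ℝ (Fin n × Fin d) → EuclideanSpace ℝ (Fin d))
    (hU : U = fun i x => WithLp.toLp 2 (fun (j : Fin d) => x (i, j)))
    (f : Fin n → EuclideanSpace ℝ (Fin n × Fin d) → EuclideanSpace ℝ (Fin n × Fin d) → ℝ)
    (hf : f = fun i x y => lam * H (U i x) (U i y)) :
    (∀ x x' y y' : EuclideanSpace ℝ (Fin n × Fin d),
      (n : ℝ)⁻¹ * ∑ i,
          (‖gradient (fun u => f i u y) x - gradient (fun u => f i u y') x'‖ ^ 2 +
            ‖gradient (fun v => f i x v) y - gradient (fun v => f i x' v) y'‖ ^ 2)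
        ≤ (lam * Real.sqrt ((8 + 2 * α ^ 2) / n)) ^ 2 * (‖x - x'‖ ^ 2 + ‖y - y'‖ ^ 2)) ∧
    (∀ y : EuclideanSpace ℝ (Fin n × Fin d),
      StrongConvexOn Set.univ (lam * α / n) (fun x => (n : ℝ)⁻¹ * ∑ i, f i x y)) ∧
    (∀ x : EuclideanSpace ℝ (Fin n × Fin d),
      StrongConcaveOn Set.univ (lam * α / n) (fun y => (n : ℝ)⁻¹ * ∑ i, f i x y)) := by
  have hf' : f = blockSaddle α lam B c := by
    subst hf hH hU
    funext i x y
    simp only [blockSaddle, EuclideanSpace.real_norm_sq_eq]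
    rfl
  have hαω : α * ω ≤ 1 := hω ▸ mul_sqrt_sq_add_four_sub_div_two_le_one α
  have hB₁ : ∀ i j, |B i j| ≤ 1 := by
    intro i j
    rw [hB]
    dsimp only
    split_ifs
    · rw [abs_of_nonneg (Real.sqrt_nonneg _), Real.sqrt_le_one]
      exact hαω
    all_goals norm_num
  have hB₀ : ∀ i j : Fin d, i ≠ j → (i : ℕ) ≠ j + 1 → B i j = 0 := by
    intro i j h h'
    simp [hB, h, h']
  subst hf'
  refine ⟨fun x x' y y' => ?_, fun y => ?_, fun x => ?_⟩
  · calc _ ≤ (n : ℝ)⁻¹ * (lam ^ 2 * (2 * (4 + α ^ 2)) * (‖x - x'‖ ^ 2 + ‖y - y'‖ ^ 2)) := by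
          gcongr
          exact sum_norm_sq_sub_gradient_blockSaddle_le α lam B c
            (sum_sq_mulVec_le_four_of_bidiagonal hB₁ hB₀)
            (sum_sq_transpose_mulVec_le_four_of_bidiagonal hB₁ hB₀) x x' y y'
      _ = _ := by rw [mul_pow, Real.sq_sqrt (by positivity)]; ring
  · rw [div_eq_mul_inv]
    exact strongConvexOn_smul_sum_blockSaddle α lam B c _ y
  · rw [div_eq_mul_inv]
    exact strongConcaveOn_smul_sum_blockSaddle α lam B c _ x

/-- With `H` the hard instance on `ℝ^d × ℝ^d` and `U₁, …, Uₙ` the blocks of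
a partition of the identity of order `nd` (here `(U_i x)_j = x_{(i,j)}` on `ℝ^{n×d}`), the
family `f_i(x,y) = λ H(U_i x, U_i y)` is `λ√((8+2α²)/n)`-average smooth and
`f = (1/n)∑ f_i` is `(λα/n, λα/n)`-convex-concave. -/
theorem hard_instance_finite_sum_properties
    {d n : ℕ} (hd : 1 ≤ d) (hn : 1 ≤ n) (α : ℝ) (hα : 0 < α) (lam : ℝ) (hlam : 0 < lam)
    (ω : ℝ) (hω : ω = (Real.sqrt (α ^ 2 + 4) - α) / 2)
    (B : Fin d → Fin d → ℝ)
    (hB : B = fun (i j : Fin d) =>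
      if i = j then (if (i : ℕ) = d - 1 then Real.sqrt (α * ω) else 1)
      else if (i : ℕ) = (j : ℕ) + 1 then -1 else 0)
    (c : Fin d → ℝ) (hc : c = fun (i : Fin d) => if (i : ℕ) = 0 then ω else 0)
    (H : EuclideanSpace ℝ (Fin d) → EuclideanSpace ℝ (Fin d) → ℝ)
    (hH : H = fun u v =>
      α / 2 * ‖u‖ ^ 2 + (∑ i, u i * ((∑ j, B i j * v j) - c i)) - α / 2 * ‖v‖ ^ 2)
    (U : Fin n → EuclideanSpace ℝ (Fin n × Fin d) → EuclideanSpace ℝ (Fin d))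
    (hU : U = fun i x => WithLp.toLp 2 (fun (j : Fin d) => x (i, j)))
    (f : Fin n → EuclideanSpace ℝ (Fin n × Fin d) → EuclideanSpace ℝ (Fin n × Fin d) → ℝ)
    (hf : f = fun i x y => lam * H (U i x) (U i y)) :
    (∀ x x' y y' : EuclideanSpace ℝ (Fin n × Fin d),
      (n : ℝ)⁻¹ * ∑ i,
          (‖gradient (fun u => f i u y) x - gradient (fun u => f i u y') x'‖ ^ 2 +
            ‖gradient (fun v => f i x v) y - gradient (fun v => f i x' v) y'‖ ^ 2)
        ≤ (lam * Real.sqrt ((8 + 2 * α ^ 2) / n)) ^ 2 * (‖x - x'‖ ^ 2 + ‖y - y'‖ ^ 2)) ∧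
    (∀ y : EuclideanSpace ℝ (Fin n × Fin d),
      StrongConvexOn Set.univ (lam * α / n) (fun x => (n : ℝ)⁻¹ * ∑ i, f i x y)) ∧
    (∀ x : EuclideanSpace ℝ (Fin n × Fin d),
      StrongConcaveOn Set.univ (lam * α / n) (fun y => (n : ℝ)⁻¹ * ∑ i, f i x y)) :=
  hard_instance_finite_sum_properties_general α lam ω hω B hB c H hH U hU f hf
end
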